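/- Let T = T_{p₁,…,p_ℓ} be an ℓ-dimensional torus CC and let T' be the disjoint union of the torus CCs T_{p¹₁,…,p¹_ℓ} and T_{p²₁,…,p²_ℓ}. If p₁⋯p_ℓ = p¹₁⋯p¹_ℓ + p²₁⋯p²_ℓ and p_j ≥ 3, p¹_j ≥ 3, p²_j ≥ 3 for all j, then for every HOMP model M, M(T) = M(T'), even though the Hasse graph of T is connected while the Hasse graph of T' has exactly two connected components (so their 0-th Betti numbers, 1 versus 2, differ). -/

import Mathlib

/-! Basic framework: combinatorial complexes, natural neighborhood functions,
CC coverings, Hasse graphs, and higher-order message-passing (HOMP) models. -/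

namespace TDL

/-- The raw data of a combinatorial complex over an ambient node type `S`:
a set of cells (finite, nonempty subsets of nodes) and a rank function. -/
structure PreCC (S : Type*) where
  cells : Set (Finset S)
  rk : Finset S → ℕ

/-- A (featureless) combinatorial complex.  The node set is implicitly the set of
elements appearing in cells; every singleton of such a node is a cell of rank `0`,
cells are nonempty, there are finitely many cells, and the rank function is
monotone with respect to inclusion. -/
structure CC (S : Type*) extends PreCC S where
  cells_finite : cells.Finite
  nonempty_of_mem : ∀ x ∈ cells, x.Nonempty
  singleton_mem : ∀ x ∈ cells, ∀ s ∈ x, ({s} : Finset S) ∈ cells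
  rk_singleton : ∀ s : S, ({s} : Finset S) ∈ cells → rk {s} = 0
  rk_mono : ∀ x ∈ cells, ∀ y ∈ cells, x ⊆ y → rk x ≤ rk y

/-- Names of the natural neighborhood functions: `(r₁,r₂)`-adjacency,
coadjacency, incidence and co-incidence. -/
inductive NbhdKind : Type
  | adj (r₁ r₂ : ℕ)
  | coadj (r₁ r₂ : ℕ)
  | inc (r₁ r₂ : ℕ)
  | coinc (r₁ r₂ : ℕ)
  deriving DecidableEq

/-- The two ranks mentioned by a neighborhood kind are bounded by `ℓ`. -/
def NbhdKind.bounded (ℓ : ℕ) : NbhdKind → Prop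
  | .adj r₁ r₂ => r₁ ≤ ℓ ∧ r₂ ≤ ℓ
  | .coadj r₁ r₂ => r₁ ≤ ℓ ∧ r₂ ≤ ℓ
  | .inc r₁ r₂ => r₁ ≤ ℓ ∧ r₂ ≤ ℓ
  | .coinc r₁ r₂ => r₁ ≤ ℓ ∧ r₂ ≤ ℓ

namespace PreCC

variable {S : Type*}

/-- The `r`-skeleton: the set of cells of rank `r`. -/
def skel (X : PreCC S) (r : ℕ) : Set (Finset S) := {x | x ∈ X.cells ∧ X.rk x = r}

/-- The natural neighborhood functions of a complex. -/
def nbhd (X : PreCC S) : NbhdKind → Finset S → Set (Finset S)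
  | .adj r₁ r₂, x => {y | x ∈ X.skel r₁ ∧ y ∈ X.skel r₁ ∧ ∃ z ∈ X.skel r₂, x ⊆ z ∧ y ⊆ z}
  | .coadj r₁ r₂, x => {y | x ∈ X.skel r₁ ∧ y ∈ X.skel r₁ ∧ ∃ z ∈ X.skel r₂, z ⊆ x ∧ z ⊆ y}
  | .inc r₁ r₂, x => {y | x ∈ X.skel r₁ ∧ y ∈ X.skel r₂ ∧ x ⊆ y}
  | .coinc r₁ r₂, x => {y | x ∈ X.skel r₁ ∧ y ∈ X.skel r₂ ∧ y ⊆ x}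

/-- The Hasse graph of a complex: vertices are cells, and `x, y` are joined by an
edge whenever `x ⊆ y` and `rk x = rk y - 1` (or symmetrically). -/
def hasse (X : PreCC S) : SimpleGraph {x : Finset S // x ∈ X.cells} where
  Adj a b := (a.1 ⊆ b.1 ∧ X.rk a.1 + 1 = X.rk b.1) ∨ (b.1 ⊆ a.1 ∧ X.rk b.1 + 1 = X.rk a.1)
  symm := ⟨by
    rintro a b (h | h)
    · exact Or.inr h
    · exact Or.inl h⟩
  loopless := ⟨by rintro a (⟨-, h⟩ | ⟨-, h⟩) <;> omega⟩

end PreCC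

/-- `ρ` is a CC covering of `X` by `Xt`: it maps cells of `Xt` to cells of `X`
surjectively, preserves ranks, and is a local isomorphism with respect to every
natural neighborhood function. -/
structure IsCovering {S' S : Type*} (Xt : PreCC S') (X : PreCC S)
    (ρ : Finset S' → Finset S) : Prop where
  mem : ∀ x' ∈ Xt.cells, ρ x' ∈ X.cells
  surj : ∀ x ∈ X.cells, ∃ x' ∈ Xt.cells, ρ x' = x
  rank : ∀ x' ∈ Xt.cells, X.rk (ρ x') = Xt.rk x'
  locBij : ∀ x' ∈ Xt.cells, ∀ N : NbhdKind, Set.BijOn ρ (Xt.nbhd N x') (X.nbhd N (ρ x'))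

open Classical in
/-- The multiset underlying a finite set (junk value `0` for infinite sets). -/
noncomputable def setMultiset {α : Type*} (s : Set α) : Multiset α :=
  if h : s.Finite then h.toFinset.val else 0

/-- A higher-order message-passing (HOMP) model over a feature space `D`, for
featureless complexes of dimension at most `ℓ`: a number of layers `T`, an initial
constant feature, and, per layer, message functions (per neighborhood function and
rank), permutation-invariant aggregations (functions of multisets), a combination
operator over the family of neighborhood functions with ranks at most `ℓ`,
activations, and a readout defined on multisets. -/
structure HOMP (D : Type*) (ℓ : ℕ) where
  T : ℕ
  init : D
  msg : ℕ → NbhdKind → ℕ → D → D → D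
  agg : ℕ → NbhdKind → Multiset D → D
  comb : ℕ → ({N : NbhdKind // N.bounded ℓ} → D) → D
  act : ℕ → D → D
  readout : Multiset D → D

namespace HOMP

variable {D : Type*} {ℓ : ℕ} {S : Type*}

/-- The cell feature maps computed by a HOMP model on a complex:
`h⁰_x` is the initial constant, and
`h^{t+1}_x = β_t (⊗_N (⊕ {{ m_{t,N,rk x}(h^t_x, h^t_y) : y ∈ N(x) }}))`. -/
noncomputable def feat (M : HOMP D ℓ) (X : PreCC S) : ℕ → Finset S → D
  | 0, _ => M.init
  | t + 1, x =>
      M.act t <| M.comb t fun N =>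
        M.agg t N.1 <|
          (setMultiset (X.nbhd N.1 x)).map fun y =>
            M.msg t N.1 (X.rk x) (M.feat X t x) (M.feat X t y)

/-- The output of a HOMP model: the readout of the multiset of final features. -/
noncomputable def out (M : HOMP D ℓ) (X : PreCC S) : D :=
  M.readout <| (setMultiset X.cells).map fun x => M.feat X M.T x

end HOMP

end TDL

namespace TDL

/-- The cell `s_k` of the `ℓ`-dimensional torus: the set of nodes `s + k'` for
`k' ≤ k`, with coordinatewise addition modulo `p j`. -/
def torusCell {ℓ : ℕ} (p : Fin ℓ → ℕ) (s : ∀ i, ZMod (p i)) (k : Fin ℓ → Bool) :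
    Finset (∀ i, ZMod (p i)) :=
  (Finset.univ.filter fun k' : Fin ℓ → Bool => ∀ i, k' i = true → k i = true).image
    fun k' i => s i + if k' i then 1 else 0

/-- The number of ones in `k ∈ {0,1}^ℓ`, i.e. the rank of the cell `s_k`. -/
def torusRank {ℓ : ℕ} (k : Fin ℓ → Bool) : ℕ :=
  (Finset.univ.filter fun i => k i = true).card

/-- The `ℓ`-dimensional torus combinatorial complex `T_{p₁,…,p_ℓ}`: nodes are
`ℤ/p₁ × ⋯ × ℤ/p_ℓ`, cells are the sets `s_k`, and the rank of `s_k` is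
`k₁ + ⋯ + k_ℓ`. -/
noncomputable def torusPre {ℓ : ℕ} (p : Fin ℓ → ℕ) : PreCC (∀ i, ZMod (p i)) where
  cells := {x | ∃ s k, x = torusCell p s k}
  rk x := sInf {r | ∃ s k, x = torusCell p s k ∧ r = torusRank k}

end TDL

namespace TDL

/-- The disjoint union of two complexes: cells are the images of the cells of the
two summands under the inclusions into the sum type, with inherited ranks. -/
noncomputable def PreCC.disjSum {S S' : Type*} (X : PreCC S) (Y : PreCC S') :
    PreCC (S ⊕ S') where
  cells := ((fun x => x.map Function.Embedding.inl) '' X.cells) ∪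
    ((fun y => y.map Function.Embedding.inr) '' Y.cells)
  rk z := sInf ({r | ∃ x ∈ X.cells, z = x.map Function.Embedding.inl ∧ r = X.rk x} ∪
    {r | ∃ y ∈ Y.cells, z = y.map Function.Embedding.inr ∧ r = Y.rk y})


end TDL

/-!
A torus all of whose cycles have length at least `3` looks locally like the cubical lattice
`ℤ^ℓ`: the cells in a natural neighbourhood of `s_k` are the cells `(s + d)_a` for `d_a` in the
corresponding neighbourhood of `0_k` in the lattice, and they are pairwise distinct because the
offsets `d` lie in `{-1, 0, 1}^ℓ`. By induction on the layer, the feature that a HOMP model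
computes at `s_k` therefore depends only on the type `k`, neither on `s` nor on the cycle lengths.
The output is thus the readout of the multiset in which each type occurs `p₁⋯p_ℓ` times, while
on a disjoint union the features are computed summand by summand, so each type occurs
`p¹₁⋯p¹_ℓ + p²₁⋯p²_ℓ` times.

The Hasse graph of a torus is connected: the vertex `s` is joined to `s + eᵢ` through the edge
`s_{eᵢ}`, and the `eᵢ` generate the group of nodes. In a disjoint union, comparable cells lie in
the same summand, so two connected summands give exactly two components.
-/

theorem Multiset.map_snd_product {α β γ : Type*} (s : Multiset α) (t : Multiset β) (f : β → γ) :
    (s ×ˢ t).map (fun x => f x.2) = Multiset.card s • t.map f := by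
  induction s using Multiset.induction_on with
  | empty => simp
  | cons a s ih => simp [ih, add_nsmul, add_comm]

theorem ZMod.two_ne_zero_of_three_le {n : ℕ} (hn : 3 ≤ n) : (2 : ZMod n) ≠ 0 := by
  rw [← Nat.cast_ofNat, Ne, ZMod.natCast_eq_zero_iff]
  exact Nat.not_dvd_of_pos_of_lt two_pos hn

namespace TDL

section SetMultiset

variable {α β : Type*}

theorem setMultiset_of_finite {s : Set α} (hs : s.Finite) : setMultiset s = hs.toFinset.val :=
  dif_pos hs

theorem setMultiset_of_infinite {s : Set α} (hs : s.Infinite) : setMultiset s = 0 :=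
  dif_neg hs

theorem mem_of_mem_setMultiset {s : Set α} {a : α} (h : a ∈ setMultiset s) : a ∈ s := by
  by_cases hs : s.Finite
  · simpa [setMultiset_of_finite hs] using h
  · simp [setMultiset_of_infinite hs] at h

theorem setMultiset_image {f : α → β} {s : Set α} (hf : s.InjOn f) :
    setMultiset (f '' s) = (setMultiset s).map f := by
  classical
  by_cases hs : s.Finite
  · rw [setMultiset_of_finite hs, setMultiset_of_finite (hs.image f),
      Set.Finite.toFinset_image f hs, Finset.image_val_of_injOn (by simpa using hf)]
  · rw [setMultiset_of_infinite hs, setMultiset_of_infinite (Set.Infinite.image hf hs),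
      Multiset.map_zero]

theorem setMultiset_union {s t : Set α} (hs : s.Finite) (ht : t.Finite) (hst : Disjoint s t) :
    setMultiset (s ∪ t) = setMultiset s + setMultiset t := by
  classical
  rw [setMultiset_of_finite (hs.union ht), setMultiset_of_finite hs, setMultiset_of_finite ht,
    Set.Finite.toFinset_union hs ht,
    ← Finset.disjUnion_eq_union _ _ (Set.Finite.disjoint_toFinset.2 hst)]
  rfl

theorem setMultiset_range [Fintype α] {f : α → β} (hf : f.Injective) :
    setMultiset (Set.range f) = Finset.univ.val.map f := by
  rw [← Set.image_univ, setMultiset_image hf.injOn, setMultiset_of_finite Set.finite_univ,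
    Set.Finite.toFinset_univ]

end SetMultiset

namespace PreCC

variable {S S' : Type*}

theorem mem_cells_of_mem_nbhd {X : PreCC S} {N : NbhdKind} {x y : Finset S}
    (h : y ∈ X.nbhd N x) : y ∈ X.cells := by
  cases N <;> exact h.2.1.1

/-- `e` identifies `X` with a union of connected pieces of `X'`. -/
structure IsSummandEmbedding (e : S ↪ S') (X : PreCC S) (X' : PreCC S') : Prop where
  map_mem_iff : ∀ x, x.map e ∈ X'.cells ↔ x ∈ X.cells
  rk_map : ∀ x ∈ X.cells, X'.rk (x.map e) = X.rk x
  exists_eq_map : ∀ z ∈ X'.cells, ∀ x ∈ X.cells, z ⊆ x.map e ∨ x.map e ⊆ z →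
    ∃ z₀ : Finset S, z = z₀.map e

namespace IsSummandEmbedding

variable {e : S ↪ S'} {X : PreCC S} {X' : PreCC S'}

theorem map_mem_skel_iff (he : IsSummandEmbedding e X X') {x : Finset S} {r : ℕ} :
    x.map e ∈ X'.skel r ↔ x ∈ X.skel r := by
  refine ⟨fun ⟨hx, hr⟩ => ?_, fun ⟨hx, hr⟩ => ⟨(he.map_mem_iff x).2 hx, he.rk_map x hx ▸ hr⟩⟩
  have hx := (he.map_mem_iff x).1 hx
  exact ⟨hx, he.rk_map x hx ▸ hr⟩

theorem exists_mem_skel_eq_map (he : IsSummandEmbedding e X X') {z : Finset S'} {r : ℕ}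
    (hz : z ∈ X'.skel r) {x : Finset S} (hx : x ∈ X.cells) (h : z ⊆ x.map e ∨ x.map e ⊆ z) :
    ∃ z₀ ∈ X.skel r, z = z₀.map e := by
  obtain ⟨z₀, rfl⟩ := he.exists_eq_map z hz.1 x hx h
  exact ⟨z₀, he.map_mem_skel_iff.1 hz, rfl⟩

theorem map_mem_nbhd (he : IsSummandEmbedding e X X') {N : NbhdKind} {x y : Finset S}
    (hy : y ∈ X.nbhd N x) : y.map e ∈ X'.nbhd N (x.map e) := by
  cases N with
  | adj =>
    obtain ⟨hx, hy, z, hz, hxz, hyz⟩ := hy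
    exact ⟨he.map_mem_skel_iff.2 hx, he.map_mem_skel_iff.2 hy, z.map e,
      he.map_mem_skel_iff.2 hz, Finset.map_subset_map.2 hxz, Finset.map_subset_map.2 hyz⟩
  | coadj =>
    obtain ⟨hx, hy, z, hz, hzx, hzy⟩ := hy
    exact ⟨he.map_mem_skel_iff.2 hx, he.map_mem_skel_iff.2 hy, z.map e,
      he.map_mem_skel_iff.2 hz, Finset.map_subset_map.2 hzx, Finset.map_subset_map.2 hzy⟩
  | inc =>
    obtain ⟨hx, hy, hxy⟩ := hy
    exact ⟨he.map_mem_skel_iff.2 hx, he.map_mem_skel_iff.2 hy, Finset.map_subset_map.2 hxy⟩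
  | coinc =>
    obtain ⟨hx, hy, hyx⟩ := hy
    exact ⟨he.map_mem_skel_iff.2 hx, he.map_mem_skel_iff.2 hy, Finset.map_subset_map.2 hyx⟩

theorem exists_eq_map_of_mem_nbhd (he : IsSummandEmbedding e X X') {N : NbhdKind}
    {x : Finset S} (hx : x ∈ X.cells) {y' : Finset S'} (hy' : y' ∈ X'.nbhd N (x.map e)) :
    ∃ y ∈ X.nbhd N x, y' = y.map e := by
  cases N with
  | adj =>
    obtain ⟨hxr, hy', z', hz', hxz, hyz⟩ := hy'
    obtain ⟨z, hz, rfl⟩ := he.exists_mem_skel_eq_map hz' hx (Or.inr hxz)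
    obtain ⟨y, hy, rfl⟩ := he.exists_mem_skel_eq_map hy' hz.1 (Or.inl hyz)
    exact ⟨y, ⟨he.map_mem_skel_iff.1 hxr, hy, z, hz, Finset.map_subset_map.1 hxz,
      Finset.map_subset_map.1 hyz⟩, rfl⟩
  | coadj =>
    obtain ⟨hxr, hy', z', hz', hzx, hzy⟩ := hy'
    obtain ⟨z, hz, rfl⟩ := he.exists_mem_skel_eq_map hz' hx (Or.inl hzx)
    obtain ⟨y, hy, rfl⟩ := he.exists_mem_skel_eq_map hy' hz.1 (Or.inr hzy)
    exact ⟨y, ⟨he.map_mem_skel_iff.1 hxr, hy, z, hz, Finset.map_subset_map.1 hzx,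
      Finset.map_subset_map.1 hzy⟩, rfl⟩
  | inc =>
    obtain ⟨hxr, hy', hxy⟩ := hy'
    obtain ⟨y, hy, rfl⟩ := he.exists_mem_skel_eq_map hy' hx (Or.inr hxy)
    exact ⟨y, ⟨he.map_mem_skel_iff.1 hxr, hy, Finset.map_subset_map.1 hxy⟩, rfl⟩
  | coinc =>
    obtain ⟨hxr, hy', hyx⟩ := hy'
    obtain ⟨y, hy, rfl⟩ := he.exists_mem_skel_eq_map hy' hx (Or.inl hyx)
    exact ⟨y, ⟨he.map_mem_skel_iff.1 hxr, hy, Finset.map_subset_map.1 hyx⟩, rfl⟩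

theorem nbhd_map (he : IsSummandEmbedding e X X') (N : NbhdKind) {x : Finset S}
    (hx : x ∈ X.cells) : X'.nbhd N (x.map e) = Finset.map e '' X.nbhd N x := by
  ext y'
  constructor
  · intro hy'
    obtain ⟨y, hy, rfl⟩ := he.exists_eq_map_of_mem_nbhd hx hy'
    exact ⟨y, hy, rfl⟩
  · rintro ⟨y, hy, rfl⟩
    exact he.map_mem_nbhd hy

theorem feat_map (he : IsSummandEmbedding e X X') {D : Type*} {ℓ : ℕ} (M : HOMP D ℓ)
    (t : ℕ) : ∀ x ∈ X.cells, M.feat X' t (x.map e) = M.feat X t x := by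
  induction t with
  | zero => intro _ _; rfl
  | succ t ih =>
    intro x hx
    simp only [HOMP.feat, he.nbhd_map _ hx, setMultiset_image (Finset.map_injective e).injOn,
      Multiset.map_map, Function.comp_def, he.rk_map x hx, ih x hx]
    congr 2
    funext N
    congr 1
    exact Multiset.map_congr rfl fun y hy =>
      by rw [ih y (mem_cells_of_mem_nbhd (mem_of_mem_setMultiset hy))]

def hasseHom (he : IsSummandEmbedding e X X') : X.hasse →g X'.hasse where
  toFun v := ⟨v.1.map e, (he.map_mem_iff _).2 v.2⟩
  map_rel' := by
    rintro v w (⟨hvw, hr⟩ | ⟨hwv, hr⟩)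
    · exact Or.inl ⟨Finset.map_subset_map.2 hvw, by
        simp only [he.rk_map _ v.2, he.rk_map _ w.2, hr]⟩
    · exact Or.inr ⟨Finset.map_subset_map.2 hwv, by
        simp only [he.rk_map _ v.2, he.rk_map _ w.2, hr]⟩

end IsSummandEmbedding

end PreCC

section DisjSum

variable {S S' : Type*} {X : PreCC S} {Y : PreCC S'}

open Function (Embedding)

theorem PreCC.cells_disjSum :
    (X.disjSum Y).cells =
      Finset.map Embedding.inl '' X.cells ∪ Finset.map Embedding.inr '' Y.cells :=
  rfl

theorem PreCC.mem_cells_disjSum {z : Finset (S ⊕ S')} :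
    z ∈ (X.disjSum Y).cells ↔
      (∃ x ∈ X.cells, z = x.map Embedding.inl) ∨ ∃ y ∈ Y.cells, z = y.map Embedding.inr := by
  simp only [cells_disjSum, Set.mem_union, Set.mem_image, eq_comm]

theorem not_map_inl_subset_map_inr {x : Finset S} (hx : x.Nonempty) (y : Finset S') :
    ¬x.map Embedding.inl ⊆ y.map Embedding.inr := fun h => by
  obtain ⟨a, ha⟩ := hx
  simpa using h (Finset.mem_map_of_mem _ ha)

theorem not_map_inr_subset_map_inl {y : Finset S'} (hy : y.Nonempty) (x : Finset S) :
    ¬y.map Embedding.inr ⊆ x.map Embedding.inl := fun h => by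
  obtain ⟨b, hb⟩ := hy
  simpa using h (Finset.mem_map_of_mem _ hb)

theorem PreCC.isSummandEmbedding_inl (hX : ∀ x ∈ X.cells, x.Nonempty)
    (hY : ∀ y ∈ Y.cells, y.Nonempty) : IsSummandEmbedding Embedding.inl X (X.disjSum Y) where
  map_mem_iff x := by
    refine ⟨fun h => ?_, fun h => Set.mem_union_left _ ⟨x, h, rfl⟩⟩
    rcases mem_cells_disjSum.1 h with ⟨x', hx', he⟩ | ⟨y, hy, he⟩
    · rwa [Finset.map_injective _ he]
    · exact absurd he.ge (not_map_inr_subset_map_inl (hY y hy) x)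
  rk_map x hx := by
    show sInf (_ ∪ _) = _
    rw [← csInf_singleton (X.rk x)]
    congr 1
    ext r
    simp only [Set.mem_union, Set.mem_ofPred_eq, Set.mem_singleton_iff,
      (Finset.map_injective _).eq_iff]
    constructor
    · rintro (⟨x', -, rfl, rfl⟩ | ⟨y, hy, he, -⟩)
      · rfl
      · exact absurd he.ge (not_map_inr_subset_map_inl (hY y hy) x)
    · rintro rfl
      exact Or.inl ⟨x, hx, rfl, rfl⟩
  exists_eq_map z hz x hx h := by
    rcases mem_cells_disjSum.1 hz with ⟨z₀, -, rfl⟩ | ⟨y, hy, rfl⟩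
    · exact ⟨z₀, rfl⟩
    · exact h.elim (absurd · (not_map_inr_subset_map_inl (hY y hy) x))
        (absurd · (not_map_inl_subset_map_inr (hX x hx) y))

theorem PreCC.isSummandEmbedding_inr (hX : ∀ x ∈ X.cells, x.Nonempty)
    (hY : ∀ y ∈ Y.cells, y.Nonempty) : IsSummandEmbedding Embedding.inr Y (X.disjSum Y) where
  map_mem_iff y := by
    refine ⟨fun h => ?_, fun h => Set.mem_union_right _ ⟨y, h, rfl⟩⟩
    rcases mem_cells_disjSum.1 h with ⟨x, hx, he⟩ | ⟨y', hy', he⟩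
    · exact absurd he.ge (not_map_inl_subset_map_inr (hX x hx) y)
    · rwa [Finset.map_injective _ he]
  rk_map y hy := by
    show sInf (_ ∪ _) = _
    rw [← csInf_singleton (Y.rk y)]
    congr 1
    ext r
    simp only [Set.mem_union, Set.mem_ofPred_eq, Set.mem_singleton_iff,
      (Finset.map_injective _).eq_iff]
    constructor
    · rintro (⟨x, hx, he, -⟩ | ⟨y', -, rfl, rfl⟩)
      · exact absurd he.ge (not_map_inl_subset_map_inr (hX x hx) y)
      · rfl
    · rintro rfl
      exact Or.inr ⟨y, hy, rfl, rfl⟩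
  exists_eq_map z hz y hy h := by
    rcases mem_cells_disjSum.1 hz with ⟨x, hx, rfl⟩ | ⟨z₀, -, rfl⟩
    · exact h.elim (absurd · (not_map_inl_subset_map_inr (hX x hx) y))
        (absurd · (not_map_inr_subset_map_inl (hY y hy) x))
    · exact ⟨z₀, rfl⟩

theorem PreCC.card_connectedComponent_hasse_disjSum (hX : ∀ x ∈ X.cells, x.Nonempty)
    (hY : ∀ y ∈ Y.cells, y.Nonempty) (hXc : X.hasse.Connected) (hYc : Y.hasse.Connected) :
    Nat.card (X.disjSum Y).hasse.ConnectedComponent = 2 := by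
  have hl := isSummandEmbedding_inl hX hY
  have hr := isSummandEmbedding_inr hX hY
  set G := (X.disjSum Y).hasse
  let IsLeft (v : {z // z ∈ (X.disjSum Y).cells}) : Prop :=
    ∃ x : Finset S, v.1 = x.map Embedding.inl
  have isLeft_of_adj : ∀ v w, G.Adj v w → IsLeft v → IsLeft w := by
    rintro v w hvw ⟨x, hx⟩
    have hxX : x ∈ X.cells := (hl.map_mem_iff x).1 (hx ▸ v.2)
    refine hl.exists_eq_map w.1 w.2 x hxX ?_
    rw [← hx]
    rcases hvw with ⟨h, -⟩ | ⟨h, -⟩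
    exacts [Or.inr h, Or.inl h]
  have isLeft_iff_of_reachable : ∀ v w, G.Reachable v w → (IsLeft v ↔ IsLeft w) := by
    intro v w h
    rw [SimpleGraph.reachable_iff_reflTransGen] at h
    induction h with
    | refl => rfl
    | tail _ hbc ih => exact ih.trans ⟨isLeft_of_adj _ _ hbc, isLeft_of_adj _ _ hbc.symm⟩
  obtain ⟨x₀⟩ := hXc.nonempty
  obtain ⟨y₀⟩ := hYc.nonempty
  rw [Nat.card_eq_two_iff]
  refine ⟨G.connectedComponentMk (hl.hasseHom x₀), G.connectedComponentMk (hr.hasseHom y₀),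
    fun h => ?_, ?_⟩
  · obtain ⟨x, hx⟩ := (isLeft_iff_of_reachable _ _ (SimpleGraph.ConnectedComponent.exact h)).1
      ⟨x₀.1, rfl⟩
    exact not_map_inr_subset_map_inl (hY _ y₀.2) x hx.le
  · ext c
    induction c using SimpleGraph.ConnectedComponent.ind with | h v
    simp only [Set.mem_insert_iff, Set.mem_singleton_iff, Set.mem_univ, iff_true,
      SimpleGraph.ConnectedComponent.eq]
    rcases mem_cells_disjSum.1 v.2 with ⟨x, hx, hv⟩ | ⟨y, hy, hv⟩
    · left
      convert ((hXc.preconnected x₀ ⟨x, hx⟩).map hl.hasseHom).symm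
      exact Subtype.ext hv
    · right
      convert ((hYc.preconnected y₀ ⟨y, hy⟩).map hr.hasseHom).symm
      exact Subtype.ext hv

end DisjSum

namespace HOMP

variable {D : Type*} {ℓ : ℕ} {S S' : Type*}

noncomputable def featMultiset (M : HOMP D ℓ) (X : PreCC S) (t : ℕ) : Multiset D :=
  (setMultiset X.cells).map (M.feat X t)

theorem out_eq_readout_featMultiset (M : HOMP D ℓ) (X : PreCC S) :
    M.out X = M.readout (M.featMultiset X M.T) :=
  rfl

open Function (Embedding) in
theorem featMultiset_disjSum (M : HOMP D ℓ) {X : PreCC S} {Y : PreCC S'}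
    (hX : ∀ x ∈ X.cells, x.Nonempty) (hY : ∀ y ∈ Y.cells, y.Nonempty)
    (hXf : X.cells.Finite) (hYf : Y.cells.Finite) (t : ℕ) :
    M.featMultiset (X.disjSum Y) t = M.featMultiset X t + M.featMultiset Y t := by
  have hdisj : Disjoint (Finset.map Embedding.inl '' X.cells)
      (Finset.map Embedding.inr '' Y.cells) := by
    rw [Set.disjoint_left]
    rintro _ ⟨x, -, rfl⟩ ⟨y, hy, he⟩
    exact not_map_inr_subset_map_inl (hY y hy) x he.le
  simp only [featMultiset]
  rw [PreCC.cells_disjSum, setMultiset_union (hXf.image _) (hYf.image _) hdisj,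
    setMultiset_image (Finset.map_injective _).injOn,
    setMultiset_image (Finset.map_injective _).injOn, Multiset.map_add, Multiset.map_map,
    Multiset.map_map]
  congr 1 <;> refine Multiset.map_congr rfl fun x hx => ?_
  · exact (PreCC.isSummandEmbedding_inl hX hY).feat_map M t x (mem_of_mem_setMultiset hx)
  · exact (PreCC.isSummandEmbedding_inr hX hY).feat_map M t x (mem_of_mem_setMultiset hx)

end HOMP

section Arc

variable {G : Type*} [CommRing G]

def unitArc (a : Bool) (s : G) : Set G := {x | x = s ∨ (a = true ∧ x = s + 1)}

/-- `ArcSub a b (s - t)` expresses `unitArc a s ⊆ unitArc b t` on a cycle of length at least `3`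
or on `ℤ`. -/
def ArcSub (a b : Bool) (δ : G) : Prop :=
  (δ = 0 ∧ (a = true → b = true)) ∨ (δ = 1 ∧ a = false ∧ b = true)

theorem unitArc_subset_unitArc_iff (h2 : (2 : G) ≠ 0) {a b : Bool} {s t : G} :
    unitArc a s ⊆ unitArc b t ↔ ArcSub a b (s - t) := by
  have h1 : (1 : G) ≠ 0 := fun h => h2 (by rw [← one_add_one_eq_two, h, add_zero])
  have hx1 : ∀ x : G, x + 1 ≠ x := fun x h => h1 (by simpa using h)
  have hx2 : ∀ x : G, x + 1 + 1 ≠ x := fun x h =>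
    h2 (by rw [← one_add_one_eq_two]; simpa [add_assoc] using h)
  cases a <;> cases b <;> simp [unitArc, ArcSub, Set.subset_def, sub_eq_iff_eq_add']
  · rintro rfl
    exact hx1 s
  · constructor
    · rintro ⟨rfl | rfl, h | h⟩
      exacts [rfl, rfl, absurd h (hx2 t), absurd h (hx1 t)]
    · rintro rfl
      exact ⟨Or.inl rfl, Or.inr rfl⟩

theorem ArcSub.antisymm {a b : Bool} {s t : G} (hab : ArcSub a b (s - t))
    (hba : ArcSub b a (t - s)) : s = t ∧ a = b := by
  cases a <;> cases b <;> simp [ArcSub, sub_eq_zero] at hab hba ⊢ <;> grind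

theorem ArcSub.intCast {a b : Bool} {δ : ℤ} (h : ArcSub a b δ) : ArcSub a b (δ : G) := by
  rcases h with ⟨rfl, h⟩ | ⟨rfl, h⟩
  exacts [Or.inl ⟨Int.cast_zero, h⟩, Or.inr ⟨Int.cast_one, h⟩]

theorem ArcSub.exists_intCast {a b : Bool} {x : G} (h : ArcSub a b x) :
    ∃ δ : ℤ, ArcSub a b δ ∧ (δ : G) = x := by
  rcases h with ⟨rfl, h⟩ | ⟨rfl, h⟩
  exacts [⟨0, Or.inl ⟨rfl, h⟩, Int.cast_zero⟩, ⟨1, Or.inr ⟨rfl, h⟩, Int.cast_one⟩]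

end Arc

section Torus

variable {ℓ : ℕ} {p : Fin ℓ → ℕ}

theorem mem_torusCell {s v : ∀ i, ZMod (p i)} {k : Fin ℓ → Bool} :
    v ∈ torusCell p s k ↔ ∀ i, v i ∈ unitArc (k i) (s i) := by
  simp only [torusCell, Finset.mem_image, Finset.mem_filter, Finset.mem_univ, true_and, unitArc,
    Set.mem_ofPred_eq]
  constructor
  · rintro ⟨k', hk', rfl⟩ i
    cases h : k' i
    · simp [h]
    · simp [h, hk' i h]
  · intro h
    refine ⟨fun i => decide (v i ≠ s i), fun i hi => ?_, funext fun i => ?_⟩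
    · rcases h i with h' | ⟨hk, -⟩
      · simp [h'] at hi
      · exact hk
    · by_cases hv : v i = s i
      · simp [hv]
      · rcases h i with h' | ⟨-, h'⟩
        · exact absurd h' hv
        · rw [if_pos (decide_eq_true hv), h']

theorem coe_torusCell (s : ∀ i, ZMod (p i)) (k : Fin ℓ → Bool) :
    (torusCell p s k : Set (∀ i, ZMod (p i))) = Set.univ.pi fun i => unitArc (k i) (s i) := by
  ext v
  simp [mem_torusCell]

theorem torusCell_subset_torusCell_iff (hp : ∀ i, 3 ≤ p i) {s t : ∀ i, ZMod (p i)}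
    {a b : Fin ℓ → Bool} :
    torusCell p s a ⊆ torusCell p t b ↔ ∀ i, ArcSub (a i) (b i) (s i - t i) := by
  rw [← Finset.coe_subset, coe_torusCell, coe_torusCell, Set.univ_pi_subset_univ_pi_iff]
  have hne : ¬∃ i, unitArc (a i) (s i) = ∅ := fun ⟨i, h⟩ =>
    (Set.eq_empty_iff_forall_notMem.1 h) (s i) (Or.inl rfl)
  simp only [hne, or_false]
  exact forall_congr' fun i => unitArc_subset_unitArc_iff (ZMod.two_ne_zero_of_three_le (hp i))

theorem torusCell_eq_torusCell_iff (hp : ∀ i, 3 ≤ p i) {s t : ∀ i, ZMod (p i)}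
    {a b : Fin ℓ → Bool} : torusCell p s a = torusCell p t b ↔ s = t ∧ a = b := by
  refine ⟨fun h => ?_, fun ⟨hs, hk⟩ => hs ▸ hk ▸ rfl⟩
  have hab := (torusCell_subset_torusCell_iff hp).1 h.le
  have hba := (torusCell_subset_torusCell_iff hp).1 h.ge
  have := fun i => (hab i).antisymm (hba i)
  exact ⟨funext fun i => (this i).1, funext fun i => (this i).2⟩

theorem rk_torusCell (hp : ∀ i, 3 ≤ p i) (s : ∀ i, ZMod (p i)) (k : Fin ℓ → Bool) :
    (torusPre p).rk (torusCell p s k) = torusRank k := by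
  show sInf _ = _
  rw [← csInf_singleton (torusRank k)]
  congr 1
  ext r
  simp only [Set.mem_ofPred_eq, Set.mem_singleton_iff, torusCell_eq_torusCell_iff hp]
  constructor
  · rintro ⟨_, _, ⟨-, rfl⟩, rfl⟩
    rfl
  · rintro rfl
    exact ⟨s, k, ⟨rfl, rfl⟩, rfl⟩

theorem torusCell_mem_skel_iff (hp : ∀ i, 3 ≤ p i) {s : ∀ i, ZMod (p i)} {k : Fin ℓ → Bool}
    {r : ℕ} : torusCell p s k ∈ (torusPre p).skel r ↔ torusRank k = r :=
  ⟨fun h => rk_torusCell hp s k ▸ h.2, fun h => ⟨⟨s, k, rfl⟩, (rk_torusCell hp s k).trans h⟩⟩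

theorem torusPre_cells_finite (hp : ∀ i, 3 ≤ p i) : (torusPre p).cells.Finite := by
  have : ∀ i, NeZero (p i) := fun i => ⟨by have := hp i; omega⟩
  exact Set.toFinite _

theorem nonempty_of_mem_torusPre_cells {x : Finset (∀ i, ZMod (p i))}
    (hx : x ∈ (torusPre p).cells) : x.Nonempty := by
  obtain ⟨s, k, rfl⟩ := hx
  exact ⟨s, mem_torusCell.2 fun _ => Or.inl rfl⟩

/-- A cell `d_a` of the cubical lattice `ℤ^ℓ`: base point `d` and type `a`. -/
abbrev LatticeCell (ℓ : ℕ) := (Fin ℓ → ℤ) × (Fin ℓ → Bool)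

/-- Inclusion `y ⊆ z` of cells of the cubical lattice. -/
def LatticeCell.IsFace (y z : LatticeCell ℓ) : Prop :=
  ∀ i, ArcSub (y.2 i) (z.2 i) (y.1 i - z.1 i)

theorem LatticeCell.IsFace.sub_mem_Icc {y z : LatticeCell ℓ} (h : y.IsFace z) (i : Fin ℓ) :
    0 ≤ y.1 i - z.1 i ∧ y.1 i - z.1 i ≤ 1 := by
  rcases h i with ⟨h, -⟩ | ⟨h, -⟩ <;> omega

/-- The natural neighbourhoods of the cell `0_k` in the cubical lattice. -/
def latticeNbhd : NbhdKind → (Fin ℓ → Bool) → Set (LatticeCell ℓ)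
  | .adj r₁ r₂, k => {y | torusRank k = r₁ ∧ torusRank y.2 = r₁ ∧
      ∃ z : LatticeCell ℓ, torusRank z.2 = r₂ ∧ LatticeCell.IsFace (0, k) z ∧ y.IsFace z}
  | .coadj r₁ r₂, k => {y | torusRank k = r₁ ∧ torusRank y.2 = r₁ ∧
      ∃ z : LatticeCell ℓ, torusRank z.2 = r₂ ∧ z.IsFace (0, k) ∧ z.IsFace y}
  | .inc r₁ r₂, k => {y | torusRank k = r₁ ∧ torusRank y.2 = r₂ ∧ LatticeCell.IsFace (0, k) y}
  | .coinc r₁ r₂, k => {y | torusRank k = r₁ ∧ torusRank y.2 = r₂ ∧ y.IsFace (0, k)}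

theorem mem_Icc_of_mem_latticeNbhd {N : NbhdKind} {k : Fin ℓ → Bool} {y : LatticeCell ℓ}
    (hy : y ∈ latticeNbhd N k) (i : Fin ℓ) : -1 ≤ y.1 i ∧ y.1 i ≤ 1 := by
  cases N with
  | adj =>
    obtain ⟨-, -, z, -, hxz, hyz⟩ := hy
    have := hxz.sub_mem_Icc i
    have := hyz.sub_mem_Icc i
    simp only [Pi.zero_apply, zero_sub] at *
    omega
  | coadj =>
    obtain ⟨-, -, z, -, hzx, hzy⟩ := hy
    have := hzx.sub_mem_Icc i
    have := hzy.sub_mem_Icc i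
    simp only [Pi.zero_apply, sub_zero] at *
    omega
  | inc =>
    have := hy.2.2.sub_mem_Icc i
    simp only [Pi.zero_apply, zero_sub] at this
    omega
  | coinc =>
    have := hy.2.2.sub_mem_Icc i
    simp only [Pi.zero_apply, sub_zero] at this
    omega

/-- The cubical lattice wrapped around the torus with its origin at `s`: `d_a ↦ (s + d)_a`. -/
def torusChart (p : Fin ℓ → ℕ) (s : ∀ i, ZMod (p i)) (y : LatticeCell ℓ) :
    Finset (∀ i, ZMod (p i)) :=
  torusCell p (fun i => s i + y.1 i) y.2

@[simp]
theorem torusChart_zero (s : ∀ i, ZMod (p i)) (k : Fin ℓ → Bool) :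
    torusChart p s (0, k) = torusCell p s k := by
  simp [torusChart]

theorem torusChart_mem_skel_iff (hp : ∀ i, 3 ≤ p i) {s : ∀ i, ZMod (p i)} {y : LatticeCell ℓ}
    {r : ℕ} : torusChart p s y ∈ (torusPre p).skel r ↔ torusRank y.2 = r :=
  torusCell_mem_skel_iff hp

theorem torusChart_mono (hp : ∀ i, 3 ≤ p i) (s : ∀ i, ZMod (p i)) {y z : LatticeCell ℓ}
    (h : y.IsFace z) : torusChart p s y ⊆ torusChart p s z := by
  refine (torusCell_subset_torusCell_iff hp).2 fun i => ?_
  convert (h i).intCast (G := ZMod (p i)) using 1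
  push_cast
  ring

theorem exists_torusChart_of_torusChart_subset (hp : ∀ i, 3 ≤ p i) {s : ∀ i, ZMod (p i)}
    {y : LatticeCell ℓ} {w : Finset (∀ i, ZMod (p i))} (hw : w ∈ (torusPre p).cells)
    (h : torusChart p s y ⊆ w) : ∃ z, w = torusChart p s z ∧ y.IsFace z := by
  obtain ⟨u, b, rfl⟩ := hw
  choose δ hδ hδu using fun i => ((torusCell_subset_torusCell_iff hp).1 h i).exists_intCast
  refine ⟨(y.1 - δ, b), ?_, fun i => by simpa using hδ i⟩
  simp only [torusChart, Pi.sub_apply, Int.cast_sub, hδu]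
  congr 1
  funext i
  ring

theorem exists_torusChart_of_subset_torusChart (hp : ∀ i, 3 ≤ p i) {s : ∀ i, ZMod (p i)}
    {z : LatticeCell ℓ} {w : Finset (∀ i, ZMod (p i))} (hw : w ∈ (torusPre p).cells)
    (h : w ⊆ torusChart p s z) : ∃ y, w = torusChart p s y ∧ y.IsFace z := by
  obtain ⟨v, a, rfl⟩ := hw
  choose δ hδ hδv using fun i => ((torusCell_subset_torusCell_iff hp).1 h i).exists_intCast
  refine ⟨(z.1 + δ, a), ?_, fun i => by simpa using hδ i⟩
  simp only [torusChart, Pi.add_apply, Int.cast_add, hδv]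
  congr 1
  funext i
  ring

theorem torusChart_mem_nbhd (hp : ∀ i, 3 ≤ p i) (s : ∀ i, ZMod (p i)) {N : NbhdKind}
    {k : Fin ℓ → Bool} {y : LatticeCell ℓ} (hy : y ∈ latticeNbhd N k) :
    torusChart p s y ∈ (torusPre p).nbhd N (torusCell p s k) := by
  rw [← torusChart_zero]
  cases N with
  | adj =>
    obtain ⟨hx, hy, z, hz, hxz, hyz⟩ := hy
    exact ⟨(torusChart_mem_skel_iff hp).2 hx, (torusChart_mem_skel_iff hp).2 hy,
      torusChart p s z, (torusChart_mem_skel_iff hp).2 hz, torusChart_mono hp s hxz,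
      torusChart_mono hp s hyz⟩
  | coadj =>
    obtain ⟨hx, hy, z, hz, hzx, hzy⟩ := hy
    exact ⟨(torusChart_mem_skel_iff hp).2 hx, (torusChart_mem_skel_iff hp).2 hy,
      torusChart p s z, (torusChart_mem_skel_iff hp).2 hz, torusChart_mono hp s hzx,
      torusChart_mono hp s hzy⟩
  | inc =>
    obtain ⟨hx, hy, hxy⟩ := hy
    exact ⟨(torusChart_mem_skel_iff hp).2 hx, (torusChart_mem_skel_iff hp).2 hy,
      torusChart_mono hp s hxy⟩
  | coinc =>
    obtain ⟨hx, hy, hyx⟩ := hy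
    exact ⟨(torusChart_mem_skel_iff hp).2 hx, (torusChart_mem_skel_iff hp).2 hy,
      torusChart_mono hp s hyx⟩

theorem exists_torusChart_of_mem_nbhd (hp : ∀ i, 3 ≤ p i) {s : ∀ i, ZMod (p i)}
    {N : NbhdKind} {k : Fin ℓ → Bool} {w : Finset (∀ i, ZMod (p i))}
    (hw : w ∈ (torusPre p).nbhd N (torusCell p s k)) :
    ∃ y ∈ latticeNbhd N k, w = torusChart p s y := by
  rw [← torusChart_zero] at hw
  cases N with
  | adj =>
    obtain ⟨hx, hw, z', hz', hxz, hwz⟩ := hw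
    obtain ⟨z, rfl, hz⟩ := exists_torusChart_of_torusChart_subset hp hz'.1 hxz
    obtain ⟨y, rfl, hy⟩ := exists_torusChart_of_subset_torusChart hp hw.1 hwz
    exact ⟨y, ⟨(torusChart_mem_skel_iff hp).1 hx, (torusChart_mem_skel_iff hp).1 hw, z,
      (torusChart_mem_skel_iff hp).1 hz', hz, hy⟩, rfl⟩
  | coadj =>
    obtain ⟨hx, hw, z', hz', hzx, hzw⟩ := hw
    obtain ⟨z, rfl, hz⟩ := exists_torusChart_of_subset_torusChart hp hz'.1 hzx
    obtain ⟨y, rfl, hy⟩ := exists_torusChart_of_torusChart_subset hp hw.1 hzw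
    exact ⟨y, ⟨(torusChart_mem_skel_iff hp).1 hx, (torusChart_mem_skel_iff hp).1 hw, z,
      (torusChart_mem_skel_iff hp).1 hz', hz, hy⟩, rfl⟩
  | inc =>
    obtain ⟨hx, hw, hxw⟩ := hw
    obtain ⟨y, rfl, hy⟩ := exists_torusChart_of_torusChart_subset hp hw.1 hxw
    exact ⟨y, ⟨(torusChart_mem_skel_iff hp).1 hx, (torusChart_mem_skel_iff hp).1 hw, hy⟩, rfl⟩
  | coinc =>
    obtain ⟨hx, hw, hwx⟩ := hw
    obtain ⟨y, rfl, hy⟩ := exists_torusChart_of_subset_torusChart hp hw.1 hwx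
    exact ⟨y, ⟨(torusChart_mem_skel_iff hp).1 hx, (torusChart_mem_skel_iff hp).1 hw, hy⟩, rfl⟩

theorem nbhd_torusCell (hp : ∀ i, 3 ≤ p i) (N : NbhdKind) (s : ∀ i, ZMod (p i))
    (k : Fin ℓ → Bool) :
    (torusPre p).nbhd N (torusCell p s k) = torusChart p s '' latticeNbhd N k := by
  ext w
  constructor
  · intro hw
    obtain ⟨y, hy, rfl⟩ := exists_torusChart_of_mem_nbhd hp hw
    exact ⟨y, hy, rfl⟩
  · rintro ⟨y, hy, rfl⟩
    exact torusChart_mem_nbhd hp s hy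

/-- Distinct neighbours of `0_k` differ by at most `2` in each coordinate, so they stay distinct
on cycles of length at least `3`. -/
theorem injOn_torusChart (hp : ∀ i, 3 ≤ p i) (s : ∀ i, ZMod (p i)) (N : NbhdKind)
    (k : Fin ℓ → Bool) : (latticeNbhd N k).InjOn (torusChart p s) := by
  intro y hy y' hy' h
  obtain ⟨hs, hk⟩ := (torusCell_eq_torusCell_iff hp).1 h
  refine Prod.ext (funext fun i => ?_) hk
  have hcast := add_left_cancel (congrFun hs i)
  rw [ZMod.intCast_eq_intCast_iff_dvd_sub] at hcast
  have := mem_Icc_of_mem_latticeNbhd hy i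
  have := mem_Icc_of_mem_latticeNbhd hy' i
  have := hp i
  have := Int.eq_zero_of_abs_lt_dvd hcast (abs_lt.2 ⟨by omega, by omega⟩)
  omega

/-- The features a HOMP model computes on the cubical lattice, where by translation invariance
the feature of a cell depends only on its type. -/
noncomputable def latticeFeat {D : Type*} {ℓ' : ℕ} (M : HOMP D ℓ') (ℓ : ℕ) :
    ℕ → (Fin ℓ → Bool) → D
  | 0, _ => M.init
  | t + 1, k => M.act t <| M.comb t fun N => M.agg t N.1 <|
      (setMultiset (latticeNbhd N.1 k)).map fun y =>
        M.msg t N.1 (torusRank k) (latticeFeat M ℓ t k) (latticeFeat M ℓ t y.2)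

theorem feat_torusCell (hp : ∀ i, 3 ≤ p i) {D : Type*} {ℓ' : ℕ} (M : HOMP D ℓ') (t : ℕ) :
    ∀ s k, M.feat (torusPre p) t (torusCell p s k) = latticeFeat M ℓ t k := by
  induction t with
  | zero => intro _ _; rfl
  | succ t ih =>
    intro s k
    simp only [HOMP.feat, latticeFeat, nbhd_torusCell hp,
      setMultiset_image (injOn_torusChart hp _ _ _), Multiset.map_map, Function.comp_def,
      torusChart, ih, rk_torusCell hp]

theorem featMultiset_torusPre (hp : ∀ i, 3 ≤ p i) {D : Type*} {ℓ' : ℕ} (M : HOMP D ℓ')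
    (t : ℕ) :
    M.featMultiset (torusPre p) t = (∏ i, p i) • Finset.univ.val.map (latticeFeat M ℓ t) := by
  have : ∀ i, NeZero (p i) := fun i => ⟨by have := hp i; omega⟩
  have hcells : (torusPre p).cells =
      Set.range fun x : (∀ i, ZMod (p i)) × (Fin ℓ → Bool) => torusCell p x.1 x.2 := by
    ext
    simp [torusPre, eq_comm]
  have hinj : (fun x : (∀ i, ZMod (p i)) × (Fin ℓ → Bool) => torusCell p x.1 x.2).Injective :=
    fun x y h => Prod.ext_iff.2 ((torusCell_eq_torusCell_iff hp).1 h)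
  rw [HOMP.featMultiset, hcells, setMultiset_range hinj, Multiset.map_map]
  simp only [Function.comp_def, feat_torusCell hp]
  rw [← Finset.univ_product_univ, Finset.product_val, Multiset.map_snd_product]
  simp [Fintype.card_pi]

def torusVertex (p : Fin ℓ → ℕ) (s : ∀ i, ZMod (p i)) (k : Fin ℓ → Bool) :
    {x // x ∈ (torusPre p).cells} :=
  ⟨torusCell p s k, s, k, rfl⟩

theorem torusRank_decide_mem (A : Finset (Fin ℓ)) :
    torusRank (fun i => decide (i ∈ A)) = A.card := by
  simp [torusRank]

theorem hasse_adj_torusVertex (hp : ∀ i, 3 ≤ p i) {s t : ∀ i, ZMod (p i)} {a b : Fin ℓ → Bool}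
    (h : torusCell p s a ⊆ torusCell p t b) (hr : torusRank a + 1 = torusRank b) :
    (torusPre p).hasse.Adj (torusVertex p s a) (torusVertex p t b) :=
  Or.inl ⟨h, by simp only [torusVertex, rk_torusCell hp, hr]⟩

theorem hasse_reachable_torusVertex (hp : ∀ i, 3 ≤ p i) (s : ∀ i, ZMod (p i))
    (k : Fin ℓ → Bool) :
    (torusPre p).hasse.Reachable (torusVertex p s fun _ => false) (torusVertex p s k) := by
  suffices h : ∀ A : Finset (Fin ℓ), (torusPre p).hasse.Reachable
      (torusVertex p s fun _ => false) (torusVertex p s fun i => decide (i ∈ A)) by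
    convert h (Finset.univ.filter fun i => k i = true)
    simp
  intro A
  induction A using Finset.induction_on with
  | empty => simp only [Finset.notMem_empty, decide_false]; rfl
  | insert i A hi ih =>
    refine ih.trans (hasse_adj_torusVertex hp ?_ ?_).reachable
    · refine (torusCell_subset_torusCell_iff hp).2 fun j => Or.inl ⟨sub_self _, ?_⟩
      simp only [decide_eq_true_eq, Finset.mem_insert]
      exact Or.inr
    · rw [torusRank_decide_mem, torusRank_decide_mem, Finset.card_insert_of_notMem hi]

theorem hasse_reachable_torusVertex_add_single (hp : ∀ i, 3 ≤ p i) (s : ∀ i, ZMod (p i))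
    (i : Fin ℓ) : (torusPre p).hasse.Reachable (torusVertex p s fun _ => false)
      (torusVertex p (s + Pi.single i 1) fun _ => false) := by
  refine (hasse_reachable_torusVertex hp s fun j => decide (j = i)).trans
    (hasse_adj_torusVertex hp ((torusCell_subset_torusCell_iff hp).2 fun j => ?_)
      ?_).reachable.symm
  · by_cases hj : j = i
    · subst hj
      exact Or.inr ⟨by simp, rfl, by simp⟩
    · exact Or.inl ⟨by simp [hj], by simp⟩
  · simp [torusRank, Finset.filter_eq']

theorem torusPre_hasse_connected (hp : ∀ i, 3 ≤ p i) : (torusPre p).hasse.Connected := by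
  have : ∀ i, NeZero (p i) := fun i => ⟨by have := hp i; omega⟩
  let V (s : ∀ i, ZMod (p i)) := torusVertex p s fun _ => false
  let H : AddSubmonoid (∀ i, ZMod (p i)) :=
    { carrier := {a | ∀ s, (torusPre p).hasse.Reachable (V s) (V (s + a))}
      add_mem' := fun {a _} ha hb s =>
        (ha s).trans (by simpa only [add_assoc] using hb (s + a))
      zero_mem' := fun s => by simp only [add_zero]; rfl }
  have mem_H (a) : a ∈ H := by
    rw [← Finset.univ_sum_single a]
    refine sum_mem fun i _ => ?_
    rw [← ZMod.natCast_zmod_val (a i), ← nsmul_one, Pi.single_smul]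
    exact nsmul_mem
      (show Pi.single i 1 ∈ H from fun s => hasse_reachable_torusVertex_add_single hp s i) _
  refine (SimpleGraph.connected_iff _).2 ⟨?_, ⟨V 0⟩⟩
  rintro ⟨_, s, k, rfl⟩ ⟨_, t, k', rfl⟩
  have hst : (torusPre p).hasse.Reachable (V s) (V t) := by simpa using mem_H (t - s) s
  exact ((hasse_reachable_torusVertex hp s k).symm.trans hst).trans
    (hasse_reachable_torusVertex hp t k')

end Torus

/-- Let `T = T_{p₁,…,p_ℓ}` and let `T'` be the disjoint union of the tori
`T_{p¹₁,…,p¹_ℓ}` and `T_{p²₁,…,p²_ℓ}`.  If `p₁⋯p_ℓ = p¹₁⋯p¹_ℓ + p²₁⋯p²_ℓ` and all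
cycle lengths are at least `3`, then every HOMP model assigns `T` and `T'` the
same output, even though the Hasse graph of `T` is connected while the Hasse
graph of `T'` has exactly two connected components. -/
theorem torus_vs_disjoint_tori {ℓ : ℕ} (p p₁ p₂ : Fin ℓ → ℕ)
    (hp : ∀ j, 3 ≤ p j) (hp₁ : ∀ j, 3 ≤ p₁ j) (hp₂ : ∀ j, 3 ≤ p₂ j)
    (hcard : ∏ i, p i = ∏ i, p₁ i + ∏ i, p₂ i) :
    (∀ {D : Type} {ℓ' : ℕ} (M : HOMP D ℓ'),
      M.out (torusPre p) = M.out ((torusPre p₁).disjSum (torusPre p₂))) ∧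
    (torusPre p).hasse.Connected ∧
    Nat.card ((torusPre p₁).disjSum (torusPre p₂)).hasse.ConnectedComponent = 2 := by
  have hne₁ : ∀ x ∈ (torusPre p₁).cells, x.Nonempty := fun _ => nonempty_of_mem_torusPre_cells
  have hne₂ : ∀ x ∈ (torusPre p₂).cells, x.Nonempty := fun _ => nonempty_of_mem_torusPre_cells
  refine ⟨fun M => ?_, torusPre_hasse_connected hp,
    PreCC.card_connectedComponent_hasse_disjSum hne₁ hne₂ (torusPre_hasse_connected hp₁)
      (torusPre_hasse_connected hp₂)⟩
  rw [HOMP.out_eq_readout_featMultiset, HOMP.out_eq_readout_featMultiset,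
    HOMP.featMultiset_disjSum M hne₁ hne₂ (torusPre_cells_finite hp₁) (torusPre_cells_finite hp₂),
    featMultiset_torusPre hp, featMultiset_torusPre hp₁, featMultiset_torusPre hp₂, ← add_smul,
    hcard]

end TDL
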